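/- arXiv:1110.5255 — 4 statements merged into one kernel-verified Lean document; each statement's English description precedes it below -/
import Mathlib

section
/- For a Young diagram $B$ with at most $N$ rows, $\prod_{1\leq i<j\leq N}\frac{((j-i+1)\beta)_{B_i-B_j}}{((j-i)\beta)_{B_i-B_j}} = \frac{[N\beta]_B}{G_{B,B}(0)}$, where $[x]_B = \prod_{(i,j)\in B}(x - \beta(i-1) + j - 1)$ and $G_{B,B}(0) = \prod_{(i,j)\in B}(\beta(B'_j - i) + (B_i - j) + \beta)$. -/
/-!
Fix a row `i` and put `a_d = B_i - B_{i+d}`. Since `(x)_{a+b} = (x)_a (x+a)_b`, the factors of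
row `i` telescope to `((N-i)β)_{B_i}` divided by `∏_d ((d+1)β + a_d)_{B_{i+d} - B_{i+d+1}}`.
The numerator is the row-`i` part of `[Nβ]_B`. The denominator is the row-`i` part of
`G_{B,B}(0)`: the cells `(i, j)` with `B_{i+d+1} ≤ j < B_{i+d}` are those whose column has
length `i + d + 1`, so their hook values are consecutive and form one Pochhammer symbol.
-/

open Finset

/-- Pochhammer symbol `(x)_k = x(x+1)⋯(x+k-1)` for a natural number `k`. -/
noncomputable def pochN (x : ℝ) (k : ℕ) : ℝ := ∏ m ∈ Finset.range k, (x + m)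

lemma pochN_pos {x : ℝ} (hx : 0 < x) (k : ℕ) : 0 < pochN x k :=
  prod_pos fun m _ => by positivity

lemma pochN_add (x : ℝ) (a b : ℕ) : pochN x (a + b) = pochN x a * pochN (x + a) b := by
  simp only [pochN, prod_range_add, Nat.cast_add, add_assoc]

lemma pochN_tsub_mul_pochN_tsub (x : ℝ) {a b c : ℕ} (hcb : c ≤ b) (hba : b ≤ a) :
    pochN x (a - b) * pochN (x + (a - b : ℕ)) (b - c) = pochN x (a - c) := by
  rw [← pochN_add]
  congr 1
  omega

lemma prod_Ico_sub_eq_pochN (c : ℝ) {L U : ℕ} (h : L ≤ U) :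
    ∏ j ∈ Ico L U, (c - 1 - j) = pochN (c - U) (U - L) := by
  obtain ⟨k, rfl⟩ := Nat.exists_eq_add_of_le h
  rw [prod_Ico_eq_prod_range, Nat.add_sub_cancel_left, pochN, ← prod_range_reflect]
  refine prod_congr rfl fun m hm => ?_
  rw [mem_range] at hm
  push_cast [Nat.sub_sub, Nat.cast_sub (show 1 + m ≤ k by omega)]
  ring

lemma prod_Ico_eq_prod_range_prod_Ico {M : Type*} [CommMonoid M] (f : ℕ → M) {μ : ℕ → ℕ}
    (hμ : Antitone μ) (n : ℕ) :
    ∏ j ∈ Ico (μ n) (μ 0), f j = ∏ t ∈ range n, ∏ j ∈ Ico (μ (t + 1)) (μ t), f j := by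
  induction n with
  | zero => simp
  | succ n ih =>
    rw [prod_range_succ, ← ih, mul_comm,
      prod_Ico_consecutive _ (hμ n.le_succ) (hμ n.zero_le)]

lemma pochN_ratio_telescope {β : ℝ} (hβ : 0 < β) {μ : ℕ → ℕ} (hμ : Antitone μ) (n : ℕ) :
    (∏ d ∈ range n, pochN ((d + 2) * β) (μ 0 - μ (d + 1)) / pochN ((d + 1) * β) (μ 0 - μ (d + 1))) *
      ∏ d ∈ range (n + 1), pochN ((d + 1) * β + (μ 0 - μ d : ℕ)) (μ d - μ (d + 1))
      = pochN ((n + 1) * β) (μ 0 - μ (n + 1)) := by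
  induction n with
  | zero => simp [pochN]
  | succ n ih =>
    have hpos : pochN ((n + 1 : ℕ) * β) (μ 0 - μ (n + 1)) ≠ 0 :=
      (pochN_pos (by positivity) _).ne'
    rw [prod_range_succ, prod_range_succ _ (n + 1), mul_mul_mul_comm, ih]
    push_cast at hpos ⊢
    rw [← mul_assoc, mul_div_cancel₀ _ hpos, show (n : ℝ) + 2 = n + 1 + 1 by ring]
    exact pochN_tsub_mul_pochN_tsub _ (hμ (n + 1).le_succ) (hμ (n + 1).zero_le)

namespace YoungDiagram

lemma rowLen_eq_zero_of_colLen_le (B : YoungDiagram) {N : ℕ} (hB : B.colLen 0 ≤ N) :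
    B.rowLen N = 0 := by
  by_contra h
  have := mem_iff_lt_colLen.1 (mem_iff_lt_rowLen.2 (Nat.pos_of_ne_zero h))
  omega

lemma colLen_eq_succ_of_mem_Ico (B : YoungDiagram) {k j : ℕ}
    (hj : j ∈ Ico (B.rowLen (k + 1)) (B.rowLen k)) : B.colLen j = k + 1 := by
  rw [mem_Ico] at hj
  have hk : k < B.colLen j := mem_iff_lt_colLen.1 (mem_iff_lt_rowLen.2 hj.2)
  have hk' : ¬ k + 1 < B.colLen j := fun h => by
    have := mem_iff_lt_rowLen.1 (mem_iff_lt_colLen.2 h)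
    omega
  omega

lemma prod_cells_eq_prod_range_prod_range (B : YoungDiagram) {N : ℕ} (hB : B.colLen 0 ≤ N)
    {M : Type*} [CommMonoid M] (f : ℕ → ℕ → M) :
    ∏ c ∈ B.cells, f c.1 c.2 = ∏ i ∈ range N, ∏ j ∈ range (B.rowLen i), f i j := by
  refine prod_finset_product' _ _ _ fun ⟨i, j⟩ => ?_
  simp only [mem_cells, mem_range, ← mem_iff_lt_rowLen]
  refine ⟨fun h => ⟨?_, h⟩, And.right⟩
  have := mem_iff_lt_colLen.1 h
  have := B.colLen_anti 0 j j.zero_le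
  omega

end YoungDiagram

lemma prod_hook_row (B : YoungDiagram) (β : ℝ) {i n : ℕ} (hn : B.rowLen (i + n) = 0) :
    ∏ j ∈ range (B.rowLen i),
        (β * ((B.colLen j : ℝ) - ((i : ℝ) + 1)) + ((B.rowLen i : ℝ) - ((j : ℝ) + 1)) + β)
      = ∏ t ∈ range n, pochN ((t + 1) * β + (B.rowLen i - B.rowLen (i + t) : ℕ))
          (B.rowLen (i + t) - B.rowLen (i + t + 1)) := by
  have hμ : Antitone fun t => B.rowLen (i + t) := fun a b hab => B.rowLen_anti _ _ (by omega)
  have hblocks := prod_Ico_eq_prod_range_prod_Ico (fun j =>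
    β * ((B.colLen j : ℝ) - ((i : ℝ) + 1)) + ((B.rowLen i : ℝ) - ((j : ℝ) + 1)) + β) hμ n
  simp only [add_zero, ← add_assoc, hn] at hblocks
  rw [range_eq_Ico, hblocks]
  refine prod_congr rfl fun t _ => ?_
  have hblock : ∀ j ∈ Ico (B.rowLen (i + t + 1)) (B.rowLen (i + t)),
      β * ((B.colLen j : ℝ) - ((i : ℝ) + 1)) + ((B.rowLen i : ℝ) - ((j : ℝ) + 1)) + β
        = (β * (t + 1) + B.rowLen i) - 1 - j := by
    intro j hj
    rw [B.colLen_eq_succ_of_mem_Ico hj]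
    push_cast
    ring
  rw [prod_congr rfl hblock,
    prod_Ico_sub_eq_pochN _ (B.rowLen_anti _ _ (by omega : i + t ≤ i + t + 1)),
    Nat.cast_sub (B.rowLen_anti _ _ (Nat.le_add_right i t))]
  congr 1
  ring

lemma prod_pochN_ratio_row (B : YoungDiagram) {N i : ℕ} (hN : B.rowLen N = 0) (hi : i < N)
    {β : ℝ} (hβ : 0 < β) :
    ∏ j ∈ Ico (i + 1) N,
        pochN (((j : ℝ) - (i : ℝ) + 1) * β) (B.rowLen i - B.rowLen j) /
          pochN (((j : ℝ) - (i : ℝ)) * β) (B.rowLen i - B.rowLen j)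
      = pochN ((N - i) * β) (B.rowLen i) /
        ∏ j ∈ range (B.rowLen i),
          (β * ((B.colLen j : ℝ) - ((i : ℝ) + 1)) + ((B.rowLen i : ℝ) - ((j : ℝ) + 1)) + β) := by
  obtain ⟨n, rfl⟩ : ∃ n, N = i + n + 1 := ⟨N - i - 1, by omega⟩
  rw [prod_hook_row B β (n := n + 1) hN,
    eq_div_iff (prod_ne_zero_iff.2 fun t _ => (pochN_pos (by positivity) _).ne')]
  have := pochN_ratio_telescope hβ (μ := fun t => B.rowLen (i + t))
    (fun a b hab => B.rowLen_anti _ _ (by omega)) n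
  simp only [add_zero, ← add_assoc, hN, Nat.sub_zero] at this
  rw [prod_Ico_eq_prod_range, show i + n + 1 - (i + 1) = n by omega]
  convert this using 3 with d
  · rw [add_right_comm i 1 d]
    congr 2 <;> push_cast <;> ring
  · push_cast
    ring

/-- For a Young diagram `B` with at most `N` rows,
`∏_{1≤i<j≤N} ((j-i+1)β)_{B_i-B_j} / ((j-i)β)_{B_i-B_j} = [Nβ]_B / G_{B,B}(0)`. -/
theorem stmt1 (N : ℕ) (B : YoungDiagram) (hB : B.colLen 0 ≤ N) (β : ℝ) (hβ : 0 < β) :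
    ∏ j ∈ Finset.range N, ∏ i ∈ Finset.range j,
        pochN (((j : ℝ) - (i : ℝ) + 1) * β) (B.rowLen i - B.rowLen j) /
          pochN (((j : ℝ) - (i : ℝ)) * β) (B.rowLen i - B.rowLen j)
      = (∏ c ∈ B.cells, ((N : ℝ) * β - β * (c.1 : ℝ) + (c.2 : ℝ))) /
        ∏ c ∈ B.cells,
          (β * ((B.colLen c.2 : ℝ) - ((c.1 : ℝ) + 1)) + ((B.rowLen c.1 : ℝ) - ((c.2 : ℝ) + 1)) + β) := by
  have hN := B.rowLen_eq_zero_of_colLen_le hB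
  rw [prod_comm' (s' := fun i => Ico (i + 1) N) (t' := range N)
      (fun j i => by simp only [mem_range, mem_Ico]; omega),
    prod_congr rfl fun i hi => prod_pochN_ratio_row B hN (mem_range.1 hi) hβ, prod_div_distrib,
    B.prod_cells_eq_prod_range_prod_range hB fun i j => (N : ℝ) * β - β * i + j,
    B.prod_cells_eq_prod_range_prod_range hB fun i j =>
      β * ((B.colLen j : ℝ) - ((i : ℝ) + 1)) + ((B.rowLen i : ℝ) - ((j : ℝ) + 1)) + β]
  congr 1
  refine prod_congr rfl fun i _ => prod_congr rfl fun j _ => ?_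
  ring
end

section
/- For Young diagrams $A$ (with at most $N_1$ columns) and $B$ (with at most $N_2$ rows), at $\beta = 1$: $\prod_{i=1}^{N_2}\prod_{j=1}^{N_1}\frac{x+1-(i+j)}{x+1+A'_j+B_i-(i+j)} = \prod_{(i,j)\in A}\frac{x-N_2+i-j}{x+A'_j+B_i-i-j+1} \cdot \prod_{(i,j)\in B}\frac{x-N_1-i+j}{x-B'_j-A_i+i+j-1}$. -/
open Finset

/-!
For `x` off `ℤ` every linear factor is invertible, and we induct on `B`, removing one corner
cell `(r, c)` at a time. This changes only row `r` of the grid product and of the product over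
`A`, and column `c` of the product over `B`. The three changes agree because of an identity for
the cells of `A` lying in rows `< r` and columns `≥ A_r`: a product over these cells of
`(w + i - j) / (w + i - j - 1)` telescopes along columns and along rows. For empty `B` the
identity telescopes column by column. Both sides are ratios of polynomials in `x`, so the
cross-multiplied identity, true on the dense set `ℝ \ ℤ`, holds everywhere by continuity.
-/

namespace YoungDiagram

theorem lt_rowLen_iff_lt_colLen {μ : YoungDiagram} {i j : ℕ} :
    j < μ.rowLen i ↔ i < μ.colLen j :=
  mem_iff_lt_rowLen.symm.trans mem_iff_lt_colLen

theorem rowLen_eq_of_forall_mem_iff {μ : YoungDiagram} {i n : ℕ}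
    (h : ∀ j, (i, j) ∈ μ ↔ j < n) : μ.rowLen i = n :=
  eq_of_forall_lt_iff fun j => mem_iff_lt_rowLen.symm.trans (h j)

theorem colLen_eq_of_forall_mem_iff {μ : YoungDiagram} {j n : ℕ}
    (h : ∀ i, (i, j) ∈ μ ↔ i < n) : μ.colLen j = n :=
  eq_of_forall_lt_iff fun i => mem_iff_lt_colLen.symm.trans (h i)

@[simp]
theorem rowLen_bot (i : ℕ) : (⊥ : YoungDiagram).rowLen i = 0 :=
  rowLen_eq_of_forall_mem_iff fun j => by simp

@[simp]
theorem colLen_bot (j : ℕ) : (⊥ : YoungDiagram).colLen j = 0 :=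
  colLen_eq_of_forall_mem_iff fun i => by simp

theorem rowLen_le_of_le {μ ν : YoungDiagram} (h : μ ≤ ν) (i : ℕ) :
    μ.rowLen i ≤ ν.rowLen i := by
  by_contra! hlt
  exact (ν.rowLen i).lt_irrefl (mem_iff_lt_rowLen.1 (h (mem_iff_lt_rowLen.2 hlt)))

theorem colLen_le_of_le {μ ν : YoungDiagram} (h : μ ≤ ν) (j : ℕ) :
    μ.colLen j ≤ ν.colLen j := by
  by_contra! hlt
  exact (ν.colLen j).lt_irrefl (mem_iff_lt_colLen.1 (h (mem_iff_lt_colLen.2 hlt)))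

variable {M : Type*} [CommMonoid M]

theorem prod_cells_eq_prod_rows (μ : YoungDiagram) {R : ℕ} (hR : μ.colLen 0 ≤ R)
    (f : ℕ × ℕ → M) :
    ∏ x ∈ μ.cells, f x = ∏ i ∈ range R, ∏ j ∈ range (μ.rowLen i), f (i, j) :=
  prod_finset_product _ _ _ fun ⟨i, j⟩ => by
    rw [mem_cells, mem_range, mem_range, ← mem_iff_lt_rowLen]
    refine ⟨fun h => ⟨?_, h⟩, And.right⟩
    have := mem_iff_lt_colLen.1 (μ.up_left_mem le_rfl (Nat.zero_le j) h)
    omega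

theorem prod_cells_eq_prod_cols (μ : YoungDiagram) {C : ℕ} (hC : μ.rowLen 0 ≤ C)
    (f : ℕ × ℕ → M) :
    ∏ x ∈ μ.cells, f x = ∏ j ∈ range C, ∏ i ∈ range (μ.colLen j), f (i, j) :=
  prod_finset_product_right _ _ _ fun ⟨i, j⟩ => by
    rw [mem_cells, mem_range, mem_range, ← mem_iff_lt_colLen]
    refine ⟨fun h => ⟨?_, h⟩, And.right⟩
    have := mem_iff_lt_rowLen.1 (μ.up_left_mem (Nat.zero_le i) le_rfl h)
    omega

/-- The cells of `μ` in columns `≥ μ.rowLen r` are those of rows `< r` beyond `μ.rowLen r`. -/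
theorem prod_rows_Ico_eq_prod_cols_Ico (μ : YoungDiagram) {N : ℕ} (hN : μ.rowLen 0 ≤ N)
    (r : ℕ) (f : ℕ → ℕ → M) :
    ∏ i ∈ range r, ∏ j ∈ Ico (μ.rowLen r) (μ.rowLen i), f i j
      = ∏ j ∈ Ico (μ.rowLen r) N, ∏ i ∈ range (μ.colLen j), f i j :=
  prod_comm' fun i j => by
    simp only [mem_range, mem_Ico, ← lt_rowLen_iff_lt_colLen]
    have h0 := μ.rowLen_anti 0 i (Nat.zero_le i)
    have hr : r ≤ i → μ.rowLen i ≤ μ.rowLen r := μ.rowLen_anti r i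
    omega

def eraseCorner (μ : YoungDiagram) (r c : ℕ) (hr : (r + 1, c) ∉ μ) (hc : (r, c + 1) ∉ μ) :
    YoungDiagram where
  cells := μ.cells.erase (r, c)
  isLowerSet := by
    rintro ⟨a₁, a₂⟩ ⟨b₁, b₂⟩ hba ha
    simp only [coe_erase, Set.mem_sdiff, Finset.mem_coe, mem_cells, Set.mem_singleton_iff] at ha ⊢
    refine ⟨μ.isLowerSet hba ha.1, ?_⟩
    rintro ⟨rfl, rfl⟩
    obtain ⟨h₁, h₂⟩ := Prod.mk_le_mk.1 hba
    rcases h₁.lt_or_eq with h₁ | rfl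
    · exact hr (μ.up_left_mem h₁ h₂ ha.1)
    · exact hc (μ.up_left_mem le_rfl (h₂.lt_of_ne fun h => ha.2 (by rw [h])) ha.1)

section eraseCorner

variable {μ : YoungDiagram} {r c : ℕ} {hr : (r + 1, c) ∉ μ} {hc : (r, c + 1) ∉ μ}

@[simp]
theorem mem_eraseCorner {x : ℕ × ℕ} :
    x ∈ μ.eraseCorner r c hr hc ↔ x ≠ (r, c) ∧ x ∈ μ :=
  Finset.mem_erase

theorem eraseCorner_le : μ.eraseCorner r c hr hc ≤ μ :=
  fun _ hx => (mem_eraseCorner.1 hx).2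

theorem rowLen_eq_succ_of_corner (hrc : (r, c) ∈ μ) (hc : (r, c + 1) ∉ μ) :
    μ.rowLen r = c + 1 := by
  rw [mem_iff_lt_rowLen] at hrc hc
  omega

theorem colLen_eq_succ_of_corner (hrc : (r, c) ∈ μ) (hr : (r + 1, c) ∉ μ) :
    μ.colLen c = r + 1 := by
  rw [mem_iff_lt_colLen] at hrc hr
  omega

theorem rowLen_eraseCorner (hrc : (r, c) ∈ μ) :
    (μ.eraseCorner r c hr hc).rowLen = Function.update μ.rowLen r c := by
  have := rowLen_eq_succ_of_corner hrc hc
  funext i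
  refine rowLen_eq_of_forall_mem_iff fun j => ?_
  rcases eq_or_ne i r with rfl | hi
  · rw [mem_eraseCorner, mem_iff_lt_rowLen, Function.update_self, ne_eq, Prod.mk.injEq]
    omega
  · rw [mem_eraseCorner, mem_iff_lt_rowLen, Function.update_of_ne hi]
    simp [hi]

theorem colLen_eraseCorner (hrc : (r, c) ∈ μ) :
    (μ.eraseCorner r c hr hc).colLen = Function.update μ.colLen c r := by
  have := colLen_eq_succ_of_corner hrc hr
  funext j
  refine colLen_eq_of_forall_mem_iff fun i => ?_
  rcases eq_or_ne j c with rfl | hj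
  · rw [mem_eraseCorner, mem_iff_lt_colLen, Function.update_self, ne_eq, Prod.mk.injEq]
    omega
  · rw [mem_eraseCorner, mem_iff_lt_colLen, Function.update_of_ne hj]
    simp [hj]

end eraseCorner

theorem exists_corner {μ : YoungDiagram} (hμ : μ ≠ ⊥) :
    ∃ r c, (r + 1, c) ∉ μ ∧ (r, c + 1) ∉ μ ∧ (r, c) ∈ μ := by
  obtain ⟨⟨a, b⟩, hab⟩ : μ.cells.Nonempty :=
    nonempty_iff_ne_empty.2 fun h => hμ (YoungDiagram.ext (by rw [h, cells_bot]))
  have h0 : 0 < μ.colLen 0 :=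
    mem_iff_lt_colLen.1 (μ.up_left_mem (Nat.zero_le a) (Nat.zero_le b) hab)
  have h1 : 0 < μ.rowLen (μ.colLen 0 - 1) :=
    mem_iff_lt_rowLen.1 (mem_iff_lt_colLen.2 (by omega))
  refine ⟨μ.colLen 0 - 1, μ.rowLen (μ.colLen 0 - 1) - 1, fun h => ?_, fun h => ?_,
    mem_iff_lt_rowLen.2 (by omega)⟩
  · have := mem_iff_lt_colLen.1 (μ.up_left_mem le_rfl (Nat.zero_le _) h)
    omega
  · have := mem_iff_lt_rowLen.1 h
    omega

@[elab_as_elim]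
theorem induction_on_eraseCorner {P : YoungDiagram → Prop} (bot : P ⊥)
    (eraseCorner : ∀ μ r c (hr : (r + 1, c) ∉ μ) (hc : (r, c + 1) ∉ μ), (r, c) ∈ μ →
      P (μ.eraseCorner r c hr hc) → P μ) (μ : YoungDiagram) : P μ := by
  induction h : μ.cells.card using Nat.strong_induction_on generalizing μ with
  | _ n ih =>
    rcases eq_or_ne μ ⊥ with rfl | hμ
    · exact bot
    obtain ⟨r, c, hr, hc, hrc⟩ := exists_corner hμ
    exact eraseCorner μ r c hr hc hrc
      (ih _ (h ▸ card_erase_lt_of_mem ((mem_cells _).2 hrc)) _ rfl)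

end YoungDiagram

section

variable {K : Type*} [Field K]

theorem ne_zero_of_eq_add_intCast {w y : K} (hw : ∀ n : ℤ, w + n ≠ 0) (n : ℤ)
    (h : y = w + n) : y ≠ 0 :=
  h ▸ hw n

theorem prod_Ico_div_of_ne_zero {f : ℕ → K} (hf : ∀ k, f k ≠ 0) {m n : ℕ} (h : m ≤ n) :
    ∏ k ∈ Ico m n, f (k + 1) / f k = f n / f m := by
  simpa using congrArg Units.val (prod_Ico_div (f := fun k => Units.mk0 (f k) (hf k)) h)

theorem prod_Ico_div_succ_of_ne_zero {f : ℕ → K} (hf : ∀ k, f k ≠ 0) {m n : ℕ}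
    (h : m ≤ n) :
    ∏ k ∈ Ico m n, f k / f (k + 1) = f m / f n := by
  simpa only [inv_div_inv] using
    prod_Ico_div_of_ne_zero (f := fun k => (f k)⁻¹) (fun k => inv_ne_zero (hf k)) h

theorem prod_Ico_add_div_add {v : K} (hv : ∀ n : ℤ, v + n ≠ 0) {m n : ℕ} (h : m ≤ n) :
    ∏ k ∈ Ico m n, (v + k + 1) / (v + k) = (v + n) / (v + m) := by
  simpa [add_assoc] using
    prod_Ico_div_of_ne_zero (f := fun k : ℕ => v + k) (fun k => mod_cast hv k) h

theorem prod_Ico_sub_div_sub {v : K} (hv : ∀ n : ℤ, v + n ≠ 0) {m n : ℕ} (h : m ≤ n) :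
    ∏ k ∈ Ico m n, (v - k) / (v - k - 1) = (v - m) / (v - n) := by
  have := prod_Ico_div_succ_of_ne_zero (f := fun k : ℕ => v - k)
    (fun k => ne_zero_of_eq_add_intCast hv (-k) (by push_cast; ring)) h
  simpa [sub_sub] using this

theorem prod_div_div_prod_div {ι : Type*} {s : Finset ι} {f g g' : ι → K}
    (hf : ∀ i ∈ s, f i ≠ 0) :
    (∏ i ∈ s, f i / g' i) / ∏ i ∈ s, f i / g i = ∏ i ∈ s, g i / g' i := by
  rw [← prod_div_distrib]
  exact prod_congr rfl fun i hi => div_div_div_cancel_left' _ _ (hf i hi)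

theorem prod_eq_prod_update_mul_div {ι β : Type*} [DecidableEq ι] {s : Finset ι} {r : ι}
    (hr : r ∈ s) (F : ι → β → K) (φ : ι → β) {b : β} (hb : F r b ≠ 0) :
    ∏ i ∈ s, F i (φ i)
      = (∏ i ∈ s, F i (Function.update φ r b i)) * (F r (φ r) / F r b) := by
  have : ∏ i ∈ s.erase r, F i (Function.update φ r b i) = ∏ i ∈ s.erase r, F i (φ i) :=
    prod_congr rfl fun i hi => by rw [Function.update_of_ne (ne_of_mem_erase hi)]
  rw [← mul_prod_erase s _ hr, ← mul_prod_erase s _ hr, Function.update_self, this]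
  field_simp

end

theorem prod_range_sub_mul_prod_range_add_sub {R : Type*} [CommRing R] (y : R) (N a : ℕ) :
    (∏ i ∈ range N, (y - i)) * ∏ i ∈ range a, (y + a - i)
      = (∏ i ∈ range a, (y - N + 1 + i)) * ∏ i ∈ range N, (y + a - i) := by
  calc _ = ∏ k ∈ range (a + N), (y + a - k) := by
        rw [prod_range_add, mul_comm]
        congr 1
        exact prod_congr rfl fun k _ => by push_cast; ring
    _ = _ := by
        rw [add_comm, prod_range_add, mul_comm,
          ← prod_range_reflect (fun i : ℕ => y - N + 1 + i)]
        congr 1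
        refine prod_congr rfl fun k hk => ?_
        have := mem_range.1 hk
        rw [Nat.cast_sub (by omega), Nat.cast_sub (by omega)]
        push_cast
        ring

section

variable {K : Type*} [Field K] (A : YoungDiagram) {N : ℕ} (hA : A.rowLen 0 ≤ N) (r : ℕ)
  {w : K} (hw : ∀ n : ℤ, w + n ≠ 0)
include hA hw

/-- Both sides are the product of `(w + i - j) / (w + i - j - 1)` over the cells `(i, j)` of `A`
with `j ≥ A.rowLen r`, telescoped along columns, resp. along rows. -/
theorem prod_Ico_colLen_div :
    ∏ j ∈ Ico (A.rowLen r) N, (w + A.colLen j - j - 1) / (w - j - 1)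
      = ∏ i ∈ range r, (w - A.rowLen r + i) / (w + i - A.rowLen i) := by
  calc _ = ∏ j ∈ Ico (A.rowLen r) N, ∏ i ∈ range (A.colLen j),
            (w + i - j) / (w + i - j - 1) := by
        refine prod_congr rfl fun j _ => ?_
        have hv : ∀ n : ℤ, w - j - 1 + n ≠ 0 :=
          fun n => ne_zero_of_eq_add_intCast hw (n - j - 1) (by push_cast; ring)
        rw [range_eq_Ico, prod_congr rfl fun (i : ℕ) _ => show (w + i - j) / (w + i - j - 1)
          = (w - j - 1 + i + 1) / (w - j - 1 + i) by ring, prod_Ico_add_div_add hv (Nat.zero_le _)]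
        push_cast
        ring
    _ = ∏ i ∈ range r, ∏ j ∈ Ico (A.rowLen r) (A.rowLen i), (w + i - j) / (w + i - j - 1) :=
        (A.prod_rows_Ico_eq_prod_cols_Ico hA r _).symm
    _ = _ := by
        refine prod_congr rfl fun i hi => ?_
        have hv : ∀ n : ℤ, w + i + n ≠ 0 :=
          fun n => ne_zero_of_eq_add_intCast hw (i + n) (by push_cast; ring)
        rw [prod_Ico_sub_div_sub hv (A.rowLen_anti _ _ (mem_range.1 hi).le)]
        ring

/-- The ratio of `prod_Ico_colLen_div` at `w` and at `w + 1`. -/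
theorem prod_Ico_colLen_div_succ :
    ∏ j ∈ Ico (A.rowLen r) N, (w + A.colLen j - j - 1) / (w + A.colLen j - j)
      = (w - N) / (w + r - A.rowLen r) *
          ∏ i ∈ range r, (w + i + 1 - A.rowLen i) / (w + i - A.rowLen i) := by
  have ne : ∀ {y : K} (n : ℤ), y = w + n → y ≠ 0 := ne_zero_of_eq_add_intCast hw
  have hw₁ : ∀ n : ℤ, w + 1 + n ≠ 0 := fun n => ne (1 + n) (by push_cast; ring)
  have hv : ∀ n : ℤ, w - A.rowLen r + n ≠ 0 :=
    fun n => ne (n - A.rowLen r) (by push_cast; ring)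
  have hLHS : ∏ j ∈ Ico (A.rowLen r) N, (w + A.colLen j - j - 1) / (w + A.colLen j - j)
      = (∏ j ∈ Ico (A.rowLen r) N, (w + A.colLen j - j - 1) / (w - j - 1))
        / (∏ j ∈ Ico (A.rowLen r) N, (w + 1 + A.colLen j - j - 1) / (w + 1 - j - 1))
        / ∏ j ∈ Ico (A.rowLen r) N, (w - j) / (w - j - 1) := by
    rw [← prod_div_distrib, ← prod_div_distrib]
    refine prod_congr rfl fun j _ => ?_
    have : w - j - 1 ≠ 0 := ne (-j - 1) (by push_cast; ring)
    have : w - j ≠ 0 := ne (-j) (by push_cast; ring)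
    have : w + A.colLen j - j ≠ 0 := ne (A.colLen j - j) (by push_cast; ring)
    have : w + 1 + A.colLen j - j - 1 ≠ 0 := ne (A.colLen j - j) (by push_cast; ring)
    have : w + 1 - j - 1 ≠ 0 := ne (-j) (by push_cast; ring)
    field_simp
    ring
  have hRHS : ∏ i ∈ range r, (w + i + 1 - A.rowLen i) / (w + i - A.rowLen i)
      = (∏ i ∈ range r, (w - A.rowLen r + i) / (w + i - A.rowLen i))
        / (∏ i ∈ range r, (w + 1 - A.rowLen r + i) / (w + 1 + i - A.rowLen i))
        * ∏ i ∈ range r, (w - A.rowLen r + i + 1) / (w - A.rowLen r + i) := by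
    rw [← prod_div_distrib, ← prod_mul_distrib]
    refine prod_congr rfl fun i _ => ?_
    have : w - A.rowLen r + i ≠ 0 := ne (i - A.rowLen r) (by push_cast; ring)
    have : w + 1 - A.rowLen r + i ≠ 0 := ne (i + 1 - A.rowLen r) (by push_cast; ring)
    have : w + i - A.rowLen i ≠ 0 := ne (i - A.rowLen i) (by push_cast; ring)
    field_simp
    ring
  have hN : ∏ j ∈ Ico (A.rowLen r) N, (w - j) / (w - j - 1) = (w - A.rowLen r) / (w - N) :=
    prod_Ico_sub_div_sub hw ((A.rowLen_anti 0 r (Nat.zero_le r)).trans hA)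
  have hr : ∏ i ∈ range r, (w - A.rowLen r + i + 1) / (w - A.rowLen r + i)
      = (w - A.rowLen r + r) / (w - A.rowLen r) := by
    simpa using prod_Ico_add_div_add hv (Nat.zero_le r)
  have : ∏ i ∈ range r, (w + 1 - A.rowLen r + i) / (w + 1 + i - A.rowLen i) ≠ 0 :=
    prod_ne_zero_iff.2 fun i _ => div_ne_zero (ne (1 - A.rowLen r + i) (by push_cast; ring))
      (ne (1 + i - A.rowLen i) (by push_cast; ring))
  rw [hLHS, hRHS, hN, hr, prod_Ico_colLen_div A hA r hw, prod_Ico_colLen_div A hA r hw₁]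
  have : w - A.rowLen r ≠ 0 := ne (-A.rowLen r) (by push_cast; ring)
  have : w - N ≠ 0 := ne (-N) (by push_cast; ring)
  have : w + r - A.rowLen r ≠ 0 := ne (r - A.rowLen r) (by push_cast; ring)
  field_simp
  ring

end

section Factors

variable {K : Type*} [Field K] (A : YoungDiagram) (N₁ N₂ : ℕ) (x : K)

/-! With `B_i = b`, `gridRowProd A N₁ x i b` is row `i` of the grid product and
`rowProdA A N₂ x i b` is row `i` of the product over `A`; with `B'_j = b`,
`colProdB A N₁ x j b` is column `j` of the product over `B` (all indices from `0`). -/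

def gridRowProd (i b : ℕ) : K :=
  ∏ j ∈ range N₁, (x - i - j - 1) / (x + A.colLen j + b - i - j - 1)

def rowProdA (i b : ℕ) : K :=
  ∏ j ∈ range (A.rowLen i), (x - N₂ + i - j) / (x + A.colLen j + b - i - j - 1)

def colProdB (j b : ℕ) : K :=
  ∏ i ∈ range b, (x - N₁ - i + j) / (x - b - A.rowLen i + i + j + 1)

variable {A N₁ N₂ x} (hx : ∀ n : ℤ, x + n ≠ 0)
include hx

theorem gridRowProd_ne_zero (i b : ℕ) : gridRowProd A N₁ x i b ≠ 0 :=
  prod_ne_zero_iff.2 fun j _ => div_ne_zero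
    (ne_zero_of_eq_add_intCast hx (-i - j - 1) (by push_cast; ring))
    (ne_zero_of_eq_add_intCast hx (A.colLen j + b - i - j - 1) (by push_cast; ring))

theorem rowProdA_ne_zero (i b : ℕ) : rowProdA A N₂ x i b ≠ 0 :=
  prod_ne_zero_iff.2 fun j _ => div_ne_zero
    (ne_zero_of_eq_add_intCast hx (i - N₂ - j) (by push_cast; ring))
    (ne_zero_of_eq_add_intCast hx (A.colLen j + b - i - j - 1) (by push_cast; ring))

theorem colProdB_ne_zero (j b : ℕ) : colProdB A N₁ x j b ≠ 0 :=
  prod_ne_zero_iff.2 fun i _ => div_ne_zero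
    (ne_zero_of_eq_add_intCast hx (j - N₁ - i) (by push_cast; ring))
    (ne_zero_of_eq_add_intCast hx (i + j + 1 - b - A.rowLen i) (by push_cast; ring))

theorem prod_gridRowProd_zero (hA : A.rowLen 0 ≤ N₁) {R : ℕ} (hR : A.colLen 0 ≤ R) :
    ∏ i ∈ range N₂, gridRowProd A N₁ x i 0 = ∏ i ∈ range R, rowProdA A N₂ x i 0 := by
  unfold gridRowProd rowProdA
  rw [prod_comm, ← A.prod_cells_eq_prod_rows hR
    (fun c => (x - N₂ + c.1 - c.2) / (x + A.colLen c.2 + (0 : ℕ) - c.1 - c.2 - 1)),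
    A.prod_cells_eq_prod_cols hA]
  refine prod_congr rfl fun j _ => ?_
  have ne : ∀ {y : K} (n : ℤ), y = x + n → y ≠ 0 := ne_zero_of_eq_add_intCast hx
  have hb : ∏ i ∈ range N₂, (x - j - 1 + A.colLen j - i) ≠ 0 :=
    prod_ne_zero_iff.2 fun i _ => ne (A.colLen j - j - 1 - i) (by push_cast; ring)
  have hd : ∏ i ∈ range (A.colLen j), (x - j - 1 + A.colLen j - i) ≠ 0 :=
    prod_ne_zero_iff.2 fun i _ => ne (A.colLen j - j - 1 - i) (by push_cast; ring)
  have key := (div_eq_div_iff hb hd).2 (prod_range_sub_mul_prod_range_add_sub _ N₂ (A.colLen j))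
  rw [← prod_div_distrib, ← prod_div_distrib] at key
  convert key using 2 with i _ i _ <;> push_cast <;> ring

/-- The effect on the three products of adding the cell `(r, c)` to `B`. -/
theorem gridRowProd_succ_div (hA : A.rowLen 0 ≤ N₁) (r c : ℕ) :
    gridRowProd A N₁ x r (c + 1) / gridRowProd A N₁ x r c
      = rowProdA A N₂ x r (c + 1) / rowProdA A N₂ x r c
        * (colProdB A N₁ x c (r + 1) / colProdB A N₁ x c r) := by
  have ne : ∀ {y : K} (n : ℤ), y = x + n → y ≠ 0 := ne_zero_of_eq_add_intCast hx
  have hw : ∀ n : ℤ, x + c - r + n ≠ 0 := fun n => ne (c - r + n) (by push_cast; ring)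
  have hgrid : gridRowProd A N₁ x r (c + 1) / gridRowProd A N₁ x r c
      = ∏ j ∈ range N₁, (x + c - r + A.colLen j - j - 1) / (x + c - r + A.colLen j - j) := by
    rw [gridRowProd, gridRowProd, prod_div_div_prod_div]
    · exact prod_congr rfl fun j _ => by push_cast; ring
    · exact fun j _ => ne (-r - j - 1) (by push_cast; ring)
  have hrow : rowProdA A N₂ x r (c + 1) / rowProdA A N₂ x r c
      = ∏ j ∈ range (A.rowLen r),
          (x + c - r + A.colLen j - j - 1) / (x + c - r + A.colLen j - j) := by
    rw [rowProdA, rowProdA, prod_div_div_prod_div]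
    · exact prod_congr rfl fun j _ => by push_cast; ring
    · exact fun j _ => ne (r - N₂ - j) (by push_cast; ring)
  have hcol : colProdB A N₁ x c (r + 1) / colProdB A N₁ x c r
      = (x + c - r - N₁) / (x + c - r + r - A.rowLen r) *
          ∏ i ∈ range r, (x + c - r + i + 1 - A.rowLen i) / (x + c - r + i - A.rowLen i) := by
    rw [colProdB, colProdB, prod_range_succ, mul_div_right_comm, prod_div_div_prod_div, mul_comm]
    · push_cast
      congr 1
      · ring
      · exact prod_congr rfl fun i _ => by ring
    · exact fun i _ => ne (c - N₁ - i) (by push_cast; ring)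
  rw [hgrid, hrow, hcol, ← prod_Ico_colLen_div_succ A hA r hw,
    prod_range_mul_prod_Ico _ ((A.rowLen_anti 0 r (Nat.zero_le r)).trans hA)]

theorem prod_gridRowProd_eq (B : YoungDiagram) {R C : ℕ} (hA : A.rowLen 0 ≤ N₁)
    (hR : A.colLen 0 ≤ R) (hN₂ : N₂ ≤ R) (hB : B.colLen 0 ≤ N₂)
    (hC : B.rowLen 0 ≤ C) :
    ∏ i ∈ range N₂, gridRowProd A N₁ x i (B.rowLen i)
      = (∏ i ∈ range R, rowProdA A N₂ x i (B.rowLen i)) *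
          ∏ j ∈ range C, colProdB A N₁ x j (B.colLen j) := by
  induction B using YoungDiagram.induction_on_eraseCorner with
  | bot => simp [colProdB, prod_gridRowProd_zero hx hA hR]
  | eraseCorner B r c hbelow hright hrc ih =>
    have hrN : r < N₂ := (YoungDiagram.mem_iff_lt_colLen.1
      (B.up_left_mem le_rfl (Nat.zero_le c) hrc)).trans_le hB
    have hcC : c < C := (YoungDiagram.mem_iff_lt_rowLen.1
      (B.up_left_mem (Nat.zero_le r) le_rfl hrc)).trans_le hC
    specialize ih ((YoungDiagram.colLen_le_of_le YoungDiagram.eraseCorner_le 0).trans hB)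
      ((YoungDiagram.rowLen_le_of_le YoungDiagram.eraseCorner_le 0).trans hC)
    rw [prod_eq_prod_update_mul_div (mem_range.2 hrN) _ _ (gridRowProd_ne_zero hx r c),
      prod_eq_prod_update_mul_div (mem_range.2 (hrN.trans_le hN₂)) _ _ (rowProdA_ne_zero hx r c),
      prod_eq_prod_update_mul_div (mem_range.2 hcC) _ _ (colProdB_ne_zero hx c r),
      ← YoungDiagram.rowLen_eraseCorner (hr := hbelow) (hc := hright) hrc,
      ← YoungDiagram.colLen_eraseCorner (hr := hbelow) (hc := hright) hrc, ih,
      YoungDiagram.rowLen_eq_succ_of_corner hrc hright,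
      YoungDiagram.colLen_eq_succ_of_corner hrc hbelow, gridRowProd_succ_div hx hA]
    ring

end Factors

theorem prod_grid_div_eq_prod_cells {K : Type*} [Field K] (A B : YoungDiagram) {N₁ N₂ : ℕ}
    (hA : A.rowLen 0 ≤ N₁) (hB : B.colLen 0 ≤ N₂) {x : K} (hx : ∀ n : ℤ, x + n ≠ 0) :
    ∏ i ∈ range N₂, ∏ j ∈ range N₁,
        (x - i - j - 1) / (x + A.colLen j + B.rowLen i - i - j - 1)
      = (∏ c ∈ A.cells,
          (x - N₂ + c.1 - c.2) / (x + A.colLen c.2 + B.rowLen c.1 - c.1 - c.2 - 1)) *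
        ∏ c ∈ B.cells,
          (x - N₁ - c.1 + c.2) / (x - B.colLen c.2 - A.rowLen c.1 + c.1 + c.2 + 1) := by
  rw [A.prod_cells_eq_prod_rows (R := A.colLen 0 + N₂) le_self_add,
    B.prod_cells_eq_prod_cols le_rfl]
  exact prod_gridRowProd_eq hx B hA le_self_add le_add_self hB le_rfl

theorem dense_setOf_forall_add_intCast_ne_zero : Dense {y : ℝ | ∀ n : ℤ, y + n ≠ 0} := by
  convert (Set.countable_range fun n : ℤ => -(n : ℝ)).dense_compl ℝ using 1
  ext y
  simp only [Set.mem_ofPred_eq, Set.mem_compl_iff, Set.mem_range, not_exists]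
  exact forall_congr' fun n => not_congr ⟨fun h => by linarith, fun h => by linarith⟩

theorem div_eq_div_of_forall_add_intCast_ne_zero {a b c d : ℝ → ℝ} (ha : Continuous a)
    (hb : Continuous b) (hc : Continuous c) (hd : Continuous d)
    (h : ∀ y : ℝ, (∀ n : ℤ, y + n ≠ 0) →
      b y ≠ 0 ∧ d y ≠ 0 ∧ a y / b y = c y / d y)
    {x : ℝ} (hbx : b x ≠ 0) (hdx : d x ≠ 0) : a x / b x = c x / d x := by
  have : (fun y => a y * d y) = fun y => c y * b y :=
    (ha.mul hd).ext_on dense_setOf_forall_add_intCast_ne_zero (hc.mul hb) fun y hy =>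
      let ⟨hby, hdy, hy⟩ := h y hy
      (div_eq_div_iff hby hdy).1 hy
  exact (div_eq_div_iff hbx hdx).2 (congrFun this x)

/-- For Young diagrams `A` (with at most `N1` columns) and `B` (with at most `N2` rows),
at `β = 1`:
`∏_{i=1}^{N2}∏_{j=1}^{N1} (x+1-(i+j))/(x+1+A'_j+B_i-(i+j))
  = ∏_{(i,j)∈A} (x-N2+i-j)/(x+A'_j+B_i-i-j+1) ⬝ ∏_{(i,j)∈B} (x-N1-i+j)/(x-B'_j-A_i+i+j-1)`. -/
theorem stmt7 (N1 N2 : ℕ) (A B : YoungDiagram)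
    (hA : A.rowLen 0 ≤ N1) (hB : B.colLen 0 ≤ N2) (x : ℝ)
    (hgrid : ∀ i ∈ Finset.range N2, ∀ j ∈ Finset.range N1,
      x + 1 + (A.colLen j : ℝ) + (B.rowLen i : ℝ) - (((i : ℝ) + 1) + ((j : ℝ) + 1)) ≠ 0)
    (hAc : ∀ c ∈ A.cells,
      x + (A.colLen c.2 : ℝ) + (B.rowLen c.1 : ℝ) - ((c.1 : ℝ) + 1) - ((c.2 : ℝ) + 1) + 1 ≠ 0)
    (hBc : ∀ c ∈ B.cells,
      x - (B.colLen c.2 : ℝ) - (A.rowLen c.1 : ℝ) + ((c.1 : ℝ) + 1) + ((c.2 : ℝ) + 1) - 1 ≠ 0) :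
    ∏ i ∈ Finset.range N2, ∏ j ∈ Finset.range N1,
        (x + 1 - (((i : ℝ) + 1) + ((j : ℝ) + 1))) /
          (x + 1 + (A.colLen j : ℝ) + (B.rowLen i : ℝ) - (((i : ℝ) + 1) + ((j : ℝ) + 1)))
      = (∏ c ∈ A.cells,
          (x - (N2 : ℝ) + ((c.1 : ℝ) + 1) - ((c.2 : ℝ) + 1)) /
            (x + (A.colLen c.2 : ℝ) + (B.rowLen c.1 : ℝ) - ((c.1 : ℝ) + 1) - ((c.2 : ℝ) + 1) + 1)) *
        ∏ c ∈ B.cells,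
          (x - (N1 : ℝ) - ((c.1 : ℝ) + 1) + ((c.2 : ℝ) + 1)) /
            (x - (B.colLen c.2 : ℝ) - (A.rowLen c.1 : ℝ) + ((c.1 : ℝ) + 1) + ((c.2 : ℝ) + 1) - 1) := by
  simp only [prod_div_distrib, div_mul_div_comm]
  apply div_eq_div_of_forall_add_intCast_ne_zero (x := x)
  all_goals try fun_prop
  · intro y hy
    refine ⟨?_, ?_, ?_⟩
    · exact prod_ne_zero_iff.2 fun i _ => prod_ne_zero_iff.2 fun j _ =>
        ne_zero_of_eq_add_intCast hy (A.colLen j + B.rowLen i - i - j - 1) (by push_cast; ring)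
    · exact mul_ne_zero
        (prod_ne_zero_iff.2 fun c _ => ne_zero_of_eq_add_intCast hy
          (A.colLen c.2 + B.rowLen c.1 - c.1 - c.2 - 1) (by push_cast; ring))
        (prod_ne_zero_iff.2 fun c _ => ne_zero_of_eq_add_intCast hy
          (c.1 + c.2 + 1 - B.colLen c.2 - A.rowLen c.1) (by push_cast; ring))
    · have := prod_grid_div_eq_prod_cells A B hA hB hy
      simp only [prod_div_distrib, div_mul_div_comm] at this
      convert this using 3
      all_goals exact prod_congr rfl fun _ _ => by ring
  · exact prod_ne_zero_iff.2 fun i hi => prod_ne_zero_iff.2 (hgrid i hi)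
  · exact mul_ne_zero (prod_ne_zero_iff.2 hAc) (prod_ne_zero_iff.2 hBc)
end

section
/- For Young diagrams $B$ with at most $N_2$ rows and $N_1$ a positive integer, for all $\beta$: $\prod_{i=1}^{N_1}\prod_{j=1}^{N_2}\frac{(x+1-(i+j)\beta)_{\beta}}{(x+1+B_j-(i+j)\beta)_{\beta}} = \frac{[x-N_1\beta+1-\beta]_B}{[x+1-\beta]_B}$, where $(y)_{\beta} = \Gamma(y+\beta)/\Gamma(y)$ and $[y]_B = \prod_{(i,j)\in B}(y-\beta(i-1)+j-1)$. -/
open Finset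

/-- Generalized Pochhammer symbol `(y)_β = Γ(y+β)/Γ(y)`. -/
noncomputable def gammaPoch (y β : ℝ) : ℝ := Real.Gamma (y + β) / Real.Gamma y

lemma gne {y : ℝ} (hy : Real.Gamma y ≠ 0) (n : ℕ) : y + n ≠ 0 := by
  intro h
  apply hy
  rw [Real.Gamma_eq_zero_iff]
  exact ⟨n, by linarith⟩

lemma gadd (y : ℝ) (hy : Real.Gamma y ≠ 0) (n : ℕ) :
    Real.Gamma (y + n) = (∏ k ∈ Finset.range n, (y + k)) * Real.Gamma y := by
  induction n with
  | zero => simp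
  | succ n ih =>
    have h1 : y + ((n : ℝ) + 1) = (y + n) + 1 := by ring
    push_cast
    rw [h1, Real.Gamma_add_one (gne hy n), Finset.prod_range_succ]
    push_cast at ih
    rw [ih]; ring

lemma tele (n : ℕ) (y β : ℝ)
    (h : ∀ i ∈ Finset.range (n + 1), Real.Gamma (y - (i : ℝ) * β) ≠ 0) :
    ∏ i ∈ Finset.range n, gammaPoch (y - ((i : ℝ) + 1) * β) β
      = Real.Gamma y / Real.Gamma (y - (n : ℝ) * β) := by
  induction n with
  | zero =>
    simp only [Finset.prod_range_zero, Nat.cast_zero, zero_mul, sub_zero]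
    have := h 0 (by simp)
    simp at this
    rw [div_self this]
  | succ n ih =>
    have hn : ∀ i ∈ Finset.range (n + 1), Real.Gamma (y - (i : ℝ) * β) ≠ 0 := by
      intro i hi; exact h i (Finset.mem_range.mpr (by have := Finset.mem_range.mp hi; omega))
    rw [Finset.prod_range_succ, ih hn]
    have e1 : y - ((n : ℝ) + 1) * β + β = y - (n : ℝ) * β := by ring
    have e2 : ((n : ℕ) + 1 : ℕ) = (n : ℝ) + 1 := by push_cast; ring
    rw [gammaPoch, e1]
    have hA := h n (Finset.mem_range.mpr (by omega))
    have hB : Real.Gamma (y - ((n : ℝ) + 1) * β) ≠ 0 := by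
      have := h (n + 1) (Finset.mem_range.mpr (by omega))
      push_cast at this
      exact this
    push_cast
    field_simp

lemma perrow (N1 : ℕ) (y β : ℝ) (m : ℕ)
    (h1 : ∀ i ∈ Finset.range (N1 + 1), Real.Gamma (y - (i : ℝ) * β) ≠ 0)
    (h2 : ∀ i ∈ Finset.range (N1 + 1), Real.Gamma (y + (m : ℝ) - (i : ℝ) * β) ≠ 0) :
    ∏ i ∈ Finset.range N1,
        gammaPoch (y - ((i : ℝ) + 1) * β) β / gammaPoch (y + (m : ℝ) - ((i : ℝ) + 1) * β) β
      = (∏ k ∈ Finset.range m, (y - (N1 : ℝ) * β + (k : ℝ))) /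
        ∏ k ∈ Finset.range m, (y + (k : ℝ)) := by
  rw [Finset.prod_div_distrib, tele N1 y β h1]
  have e : ∀ i : ℝ, y + (m : ℝ) - i * β = (y + (m : ℝ)) - i * β := by intro i; ring
  have h2' : ∀ i ∈ Finset.range (N1 + 1), Real.Gamma ((y + (m : ℝ)) - (i : ℝ) * β) ≠ 0 := by
    intro i hi; rw [← e]; exact h2 i hi
  have := tele N1 (y + (m : ℝ)) β h2'
  rw [show (∏ i ∈ Finset.range N1, gammaPoch (y + (m : ℝ) - ((i : ℝ) + 1) * β) β)
      = ∏ i ∈ Finset.range N1, gammaPoch ((y + (m : ℝ)) - ((i : ℝ) + 1) * β) β from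
      Finset.prod_congr rfl fun i _ => by rw [e], this]
  have hy : Real.Gamma y ≠ 0 := by have := h1 0 (by simp); simpa using this
  have hyN : Real.Gamma (y - (N1 : ℝ) * β) ≠ 0 := h1 N1 (by simp)
  have hym : Real.Gamma (y + (m : ℝ)) ≠ 0 := by have := h2 0 (by simp); simpa using this
  have hymN : Real.Gamma (y + (m : ℝ) - (N1 : ℝ) * β) ≠ 0 := h2 N1 (by simp)
  have E1 : Real.Gamma (y + (m : ℝ)) = (∏ k ∈ Finset.range m, (y + (k : ℝ))) * Real.Gamma y :=
    gadd y hy m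
  have E2 : Real.Gamma (y + (m : ℝ) - (N1 : ℝ) * β)
      = (∏ k ∈ Finset.range m, (y - (N1 : ℝ) * β + (k : ℝ))) * Real.Gamma (y - (N1 : ℝ) * β) := by
    rw [show y + (m : ℝ) - (N1 : ℝ) * β = (y - (N1 : ℝ) * β) + (m : ℝ) from by ring]
    exact gadd _ hyN m
  have hp1 : (∏ k ∈ Finset.range m, (y + (k : ℝ))) ≠ 0 := by
    intro h0; rw [E1, h0, zero_mul] at hym; exact hym rfl
  rw [show (y + (m : ℝ)) - (N1 : ℝ) * β = y + (m : ℝ) - (N1 : ℝ) * β from by ring] at *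
  rw [E1, E2]
  field_simp

lemma cells_prod (B : YoungDiagram) (N2 : ℕ) (hB : B.colLen 0 ≤ N2) (f : ℕ × ℕ → ℝ) :
    ∏ c ∈ B.cells, f c
      = ∏ j ∈ Finset.range N2, ∏ k ∈ Finset.range (B.rowLen j), f (j, k) := by
  have hset : B.cells = (Finset.range N2).biUnion
      (fun j => ({j} : Finset ℕ) ×ˢ Finset.range (B.rowLen j)) := by
    ext ⟨a, b⟩
    simp only [YoungDiagram.mem_cells, Finset.mem_biUnion, Finset.mem_range, Finset.mem_product,
      Finset.mem_singleton]
    constructor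
    · intro hab
      refine ⟨a, ?_, rfl, ?_⟩
      · have h0 : (a, 0) ∈ B := B.up_left_mem le_rfl (Nat.zero_le _) hab
        have : a < B.colLen 0 := YoungDiagram.mem_iff_lt_colLen.mp h0
        omega
      · exact YoungDiagram.mem_iff_lt_rowLen.mp hab
    · rintro ⟨j, _, rfl, hb⟩
      exact YoungDiagram.mem_iff_lt_rowLen.mpr hb
  rw [hset, Finset.prod_biUnion]
  · refine Finset.prod_congr rfl fun j _ => ?_
    rw [Finset.prod_product, Finset.prod_singleton]
  · intro u _ v _ huv
    simp only [Finset.disjoint_left]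
    rintro ⟨a, b⟩ ha hb
    simp only [Finset.mem_product, Finset.mem_singleton] at ha hb
    exact huv (ha.1 ▸ hb.1 ▸ rfl)

/-- For a Young diagram `B` with at most `N2` rows and `N1` a positive integer, for all `β`:
`∏_{i=1}^{N1}∏_{j=1}^{N2} (x+1-(i+j)β)_β / (x+1+B_j-(i+j)β)_β
  = [x-N1β+1-β]_B / [x+1-β]_B`. -/
theorem stmt8 (N1 N2 : ℕ) (hN1 : 0 < N1) (B : YoungDiagram) (hB : B.colLen 0 ≤ N2) (x β : ℝ)
    (hΓ1 : ∀ i ∈ Finset.range N1, ∀ j ∈ Finset.range N2,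
      Real.Gamma (x + 1 - (((i : ℝ) + 1) + ((j : ℝ) + 1)) * β) ≠ 0)
    (hΓ2 : ∀ i ∈ Finset.range N1, ∀ j ∈ Finset.range N2,
      Real.Gamma (x + 1 - (((i : ℝ) + 1) + ((j : ℝ) + 1)) * β + β) ≠ 0)
    (hΓ3 : ∀ i ∈ Finset.range N1, ∀ j ∈ Finset.range N2,
      Real.Gamma (x + 1 + (B.rowLen j : ℝ) - (((i : ℝ) + 1) + ((j : ℝ) + 1)) * β) ≠ 0)
    (hΓ4 : ∀ i ∈ Finset.range N1, ∀ j ∈ Finset.range N2,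
      Real.Gamma (x + 1 + (B.rowLen j : ℝ) - (((i : ℝ) + 1) + ((j : ℝ) + 1)) * β + β) ≠ 0)
    (hden : ∀ c ∈ B.cells, x + 1 - β - β * (c.1 : ℝ) + (c.2 : ℝ) ≠ 0) :
    ∏ i ∈ Finset.range N1, ∏ j ∈ Finset.range N2,
        gammaPoch (x + 1 - (((i : ℝ) + 1) + ((j : ℝ) + 1)) * β) β /
          gammaPoch (x + 1 + (B.rowLen j : ℝ) - (((i : ℝ) + 1) + ((j : ℝ) + 1)) * β) β
      = (∏ c ∈ B.cells, (x - (N1 : ℝ) * β + 1 - β - β * (c.1 : ℝ) + (c.2 : ℝ))) /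
        ∏ c ∈ B.cells, (x + 1 - β - β * (c.1 : ℝ) + (c.2 : ℝ)) := by
  rw [Finset.prod_comm]
  have key : ∀ j ∈ Finset.range N2,
      ∏ i ∈ Finset.range N1,
        gammaPoch (x + 1 - (((i : ℝ) + 1) + ((j : ℝ) + 1)) * β) β /
          gammaPoch (x + 1 + (B.rowLen j : ℝ) - (((i : ℝ) + 1) + ((j : ℝ) + 1)) * β) β
      = (∏ k ∈ Finset.range (B.rowLen j),
            (x - (N1 : ℝ) * β + 1 - β - β * (j : ℝ) + (k : ℝ))) /
          ∏ k ∈ Finset.range (B.rowLen j), (x + 1 - β - β * (j : ℝ) + (k : ℝ)) := by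
    intro j hj
    set y : ℝ := x + 1 - ((j : ℝ) + 1) * β with hy
    have h1 : ∀ i ∈ Finset.range (N1 + 1), Real.Gamma (y - (i : ℝ) * β) ≠ 0 := by
      intro i hi
      rcases Nat.eq_zero_or_pos i with rfl | hpos
      · have := hΓ2 0 (Finset.mem_range.mpr hN1) j hj
        rw [show x + 1 - (((0:ℕ) : ℝ) + 1 + ((j : ℝ) + 1)) * β + β = y - ((0:ℕ) : ℝ) * β from by
          push_cast; ring] at this
        exact this
      · obtain ⟨i', rfl⟩ := Nat.exists_eq_succ_of_ne_zero hpos.ne'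
        have hi' : i' ∈ Finset.range N1 := Finset.mem_range.mpr (by
          have := Finset.mem_range.mp hi; omega)
        have := hΓ1 i' hi' j hj
        rw [show x + 1 - (((i' : ℕ) : ℝ) + 1 + ((j : ℝ) + 1)) * β
            = y - ((i' + 1 : ℕ) : ℝ) * β from by push_cast; ring] at this
        exact this
    have h2 : ∀ i ∈ Finset.range (N1 + 1),
        Real.Gamma (y + ((B.rowLen j : ℕ) : ℝ) - (i : ℝ) * β) ≠ 0 := by
      intro i hi
      rcases Nat.eq_zero_or_pos i with rfl | hpos
      · have := hΓ4 0 (Finset.mem_range.mpr hN1) j hj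
        rw [show x + 1 + ((B.rowLen j : ℕ) : ℝ) - (((0:ℕ) : ℝ) + 1 + ((j : ℝ) + 1)) * β + β
            = y + ((B.rowLen j : ℕ) : ℝ) - ((0:ℕ) : ℝ) * β from by push_cast; ring] at this
        exact this
      · obtain ⟨i', rfl⟩ := Nat.exists_eq_succ_of_ne_zero hpos.ne'
        have hi' : i' ∈ Finset.range N1 := Finset.mem_range.mpr (by
          have := Finset.mem_range.mp hi; omega)
        have := hΓ3 i' hi' j hj
        rw [show x + 1 + ((B.rowLen j : ℕ) : ℝ) - (((i' : ℕ) : ℝ) + 1 + ((j : ℝ) + 1)) * β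
            = y + ((B.rowLen j : ℕ) : ℝ) - ((i' + 1 : ℕ) : ℝ) * β from by push_cast; ring] at this
        exact this
    have hpr := perrow N1 y β (B.rowLen j) h1 h2
    rw [show (∏ i ∈ Finset.range N1,
          gammaPoch (x + 1 - (((i : ℝ) + 1) + ((j : ℝ) + 1)) * β) β /
            gammaPoch (x + 1 + (B.rowLen j : ℝ) - (((i : ℝ) + 1) + ((j : ℝ) + 1)) * β) β)
        = ∏ i ∈ Finset.range N1,
            gammaPoch (y - ((i : ℝ) + 1) * β) β /
              gammaPoch (y + ((B.rowLen j : ℕ) : ℝ) - ((i : ℝ) + 1) * β) β from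
        Finset.prod_congr rfl fun i _ => by
          rw [show x + 1 - (((i : ℝ) + 1) + ((j : ℝ) + 1)) * β = y - ((i : ℝ) + 1) * β from by
              rw [hy]; ring,
            show x + 1 + (B.rowLen j : ℝ) - (((i : ℝ) + 1) + ((j : ℝ) + 1)) * β
              = y + ((B.rowLen j : ℕ) : ℝ) - ((i : ℝ) + 1) * β from by rw [hy]; ring],
      hpr]
    congr 1
    · exact Finset.prod_congr rfl fun k _ => by rw [hy]; ring
    · exact Finset.prod_congr rfl fun k _ => by rw [hy]; ring
  rw [Finset.prod_congr rfl key, Finset.prod_div_distrib,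
    cells_prod B N2 hB (fun c => x - (N1 : ℝ) * β + 1 - β - β * (c.1 : ℝ) + (c.2 : ℝ)),
    cells_prod B N2 hB (fun c => x + 1 - β - β * (c.1 : ℝ) + (c.2 : ℝ))]
end

section
/- For a Young diagram $A$ with at most $N_1$ columns and $N_2$ a positive integer, for all $\beta$: $\prod_{i=1}^{N_1}\prod_{j=1}^{N_2}\frac{(x+1-(i+j)\beta)_{\beta}}{(x+1+A'_i-(i+j)\beta)_{\beta}} = \frac{[x-N_2\beta+1-\beta]_{A'}}{[x+1-\beta]_{A'}}$, where $(y)_{\beta} = \Gamma(y+\beta)/\Gamma(y)$, $A'$ is the conjugate diagram, and $[y]_{A'} = \prod_{(i,j)\in A'}(y-\beta(i-1)+j-1)$. -/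
open Finset

private lemma telescope (f : ℕ → ℝ) (n : ℕ) (hf : ∀ j ≤ n, f j ≠ 0) :
    ∏ j ∈ range n, f j / f (j + 1) = f 0 / f n := by
  induction n with
  | zero => simp [div_self (hf 0 le_rfl)]
  | succ n ih =>
    rw [prod_range_succ, ih (fun j hj => hf j (Nat.le_succ_of_le hj)),
      div_mul_div_comm, mul_comm (f 0), mul_div_mul_left _ _ (hf n (Nat.le_succ n))]

private lemma gamma_ne_shift {y : ℝ} (h : Real.Gamma y ≠ 0) (k : ℕ) :
    Real.Gamma (y + k) ≠ 0 := by
  intro hz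
  rw [Real.Gamma_eq_zero_iff] at hz
  obtain ⟨m, hm⟩ := hz
  exact h ((Real.Gamma_eq_zero_iff _).mpr ⟨m + k, by push_cast; linarith⟩)

private lemma arg_ne {y : ℝ} (h : Real.Gamma y ≠ 0) (k : ℕ) : y + k ≠ 0 := by
  intro hz
  exact h ((Real.Gamma_eq_zero_iff _).mpr ⟨k, by linarith⟩)

private lemma gamma_add_nat (y : ℝ) (m : ℕ) (h : Real.Gamma y ≠ 0) :
    Real.Gamma (y + m) = Real.Gamma y * ∏ k ∈ range m, (y + k) := by
  induction m with
  | zero => simp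
  | succ m ih =>
    have : y + (m + 1 : ℕ) = (y + m) + 1 := by push_cast; ring
    rw [this, Real.Gamma_add_one (arg_ne h m), ih, prod_range_succ]
    ring

private lemma prod_cells (μ : YoungDiagram) (n : ℕ) (h : μ.colLen 0 ≤ n) (f : ℕ × ℕ → ℝ) :
    ∏ c ∈ μ.cells, f c = ∏ i ∈ range n, ∏ j ∈ range (μ.rowLen i), f (i, j) := by
  have hc : μ.cells = (range n).biUnion
      (fun i => (range (μ.rowLen i)).image (fun j => (i, j))) := by
    ext ⟨i, j⟩
    simp only [YoungDiagram.mem_cells, mem_biUnion, mem_range, mem_image]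
    constructor
    · intro hij
      refine ⟨i, ?_, j, YoungDiagram.mem_iff_lt_rowLen.mp hij, rfl⟩
      have h0 : (i, 0) ∈ μ := μ.up_left_mem le_rfl (Nat.zero_le _) hij
      exact (YoungDiagram.mem_iff_lt_colLen.mp h0).trans_le h
    · rintro ⟨a, _, b, hb, he⟩
      obtain ⟨rfl, rfl⟩ := Prod.mk.injEq .. ▸ he
      exact YoungDiagram.mem_iff_lt_rowLen.mpr hb
  rw [hc, prod_biUnion]
  · refine prod_congr rfl fun i _ => ?_
    rw [prod_image]
    intro a _ b _ hab
    simpa using hab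
  · intro a _ b _ hab
    simp only [Finset.disjoint_left, mem_image, mem_range]
    rintro ⟨c, d⟩ ⟨u, _, hu⟩ ⟨v, _, hv⟩
    apply hab
    injection hu with h1 h2
    injection hv with h3 h4
    exact h1.trans h3.symm

/-- For a Young diagram `A` with at most `N1` columns and `N2` a positive integer, for all `β`:
`∏_{i=1}^{N1}∏_{j=1}^{N2} (x+1-(i+j)β)_β / (x+1+A'_i-(i+j)β)_β
  = [x-N2β+1-β]_{A'} / [x+1-β]_{A'}`. -/
theorem stmt9 (N1 N2 : ℕ) (hN2 : 0 < N2) (A : YoungDiagram) (hA : A.rowLen 0 ≤ N1) (x β : ℝ)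
    (hΓ1 : ∀ i ∈ Finset.range N1, ∀ j ∈ Finset.range N2,
      Real.Gamma (x + 1 - (((i : ℝ) + 1) + ((j : ℝ) + 1)) * β) ≠ 0)
    (hΓ2 : ∀ i ∈ Finset.range N1, ∀ j ∈ Finset.range N2,
      Real.Gamma (x + 1 - (((i : ℝ) + 1) + ((j : ℝ) + 1)) * β + β) ≠ 0)
    (hΓ3 : ∀ i ∈ Finset.range N1, ∀ j ∈ Finset.range N2,
      Real.Gamma (x + 1 + (A.colLen i : ℝ) - (((i : ℝ) + 1) + ((j : ℝ) + 1)) * β) ≠ 0)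
    (hΓ4 : ∀ i ∈ Finset.range N1, ∀ j ∈ Finset.range N2,
      Real.Gamma (x + 1 + (A.colLen i : ℝ) - (((i : ℝ) + 1) + ((j : ℝ) + 1)) * β + β) ≠ 0)
    (hden : ∀ c ∈ A.transpose.cells, x + 1 - β - β * (c.1 : ℝ) + (c.2 : ℝ) ≠ 0) :
    ∏ i ∈ Finset.range N1, ∏ j ∈ Finset.range N2,
        gammaPoch (x + 1 - (((i : ℝ) + 1) + ((j : ℝ) + 1)) * β) β /
          gammaPoch (x + 1 + (A.colLen i : ℝ) - (((i : ℝ) + 1) + ((j : ℝ) + 1)) * β) β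
      = (∏ c ∈ A.transpose.cells, (x - (N2 : ℝ) * β + 1 - β - β * (c.1 : ℝ) + (c.2 : ℝ))) /
        ∏ c ∈ A.transpose.cells, (x + 1 - β - β * (c.1 : ℝ) + (c.2 : ℝ)) := by
  have hcol : A.transpose.colLen 0 ≤ N1 := by rw [YoungDiagram.colLen_transpose]; exact hA
  rw [prod_cells A.transpose N1 hcol, prod_cells A.transpose N1 hcol, ← prod_div_distrib]
  refine prod_congr rfl fun i hi => ?_
  simp only [YoungDiagram.rowLen_transpose]
  set a : ℝ := x + 1 - β - β * i with ha
  set m : ℕ := A.colLen i with hm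
  -- nonvanishing facts
  have hga : ∀ j ≤ N2, Real.Gamma (a - j * β) ≠ 0 := by
    intro j hj
    rcases Nat.eq_zero_or_pos j with rfl | hjp
    · have := hΓ2 i hi 0 (mem_range.mpr hN2)
      convert this using 2; push_cast; ring
    · have := hΓ1 i hi (j - 1) (mem_range.mpr (by omega))
      convert this using 2
      rw [Nat.cast_sub hjp]; push_cast; ring
  have hgb : ∀ j ≤ N2, Real.Gamma (a + m - j * β) ≠ 0 := by
    intro j hj
    rcases Nat.eq_zero_or_pos j with rfl | hjp
    · have := hΓ4 i hi 0 (mem_range.mpr hN2)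
      convert this using 2; push_cast; ring
    · have := hΓ3 i hi (j - 1) (mem_range.mpr (by omega))
      convert this using 2
      rw [Nat.cast_sub hjp]; push_cast; ring
  -- inner product telescopes
  have key : ∀ (c : ℝ), (∀ j ≤ N2, Real.Gamma (c - j * β) ≠ 0) →
      ∏ j ∈ range N2, gammaPoch (c - ((j : ℝ) + 1) * β) β
        = Real.Gamma c / Real.Gamma (c - N2 * β) := by
    intro c hc
    have t := telescope (fun j => Real.Gamma (c - j * β)) N2 hc
    have e : ∀ j ∈ range N2, gammaPoch (c - ((j : ℝ) + 1) * β) β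
        = Real.Gamma (c - (j : ℝ) * β) / Real.Gamma (c - ((j + 1 : ℕ) : ℝ) * β) := by
      intro j _
      unfold gammaPoch
      congr 1
      · push_cast; ring
      · push_cast; ring
    rw [prod_congr rfl e, t]
    norm_num
  have e1 : ∀ j ∈ range N2,
      gammaPoch (x + 1 - (((i : ℝ) + 1) + ((j : ℝ) + 1)) * β) β /
        gammaPoch (x + 1 + (A.colLen i : ℝ) - (((i : ℝ) + 1) + ((j : ℝ) + 1)) * β) β
      = gammaPoch (a - ((j : ℝ) + 1) * β) β / gammaPoch ((a + m) - ((j : ℝ) + 1) * β) β := by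
    intro j _
    congr 2 <;> push_cast <;> ring
  rw [prod_congr rfl e1, prod_div_distrib, key a hga,
    key (a + m) (by intro j hj; exact hgb j hj)]
  -- now express Gamma shifts
  have h0a : Real.Gamma a ≠ 0 := by simpa using hga 0 (Nat.zero_le _)
  have h0a' : Real.Gamma (a - N2 * β) ≠ 0 := hga N2 le_rfl
  have e2 : Real.Gamma (a + m) = Real.Gamma a * ∏ k ∈ range m, (a + k) :=
    gamma_add_nat a m h0a
  have e3 : Real.Gamma (a + m - N2 * β) = Real.Gamma (a - N2 * β) * ∏ k ∈ range m, (a - N2 * β + k) := by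
    have := gamma_add_nat (a - N2 * β) m h0a'
    rw [← this]; ring_nf
  have hden' : ∀ k ∈ range m, a + (k : ℝ) ≠ 0 := by
    intro k hk
    have hc : (i, k) ∈ A.transpose.cells := by
      rw [YoungDiagram.mem_cells, YoungDiagram.mem_iff_lt_rowLen, YoungDiagram.rowLen_transpose]
      exact mem_range.mp hk
    have := hden (i, k) hc
    rw [ha]; exact this
  have eR1 : ∏ j ∈ range m, (x - (N2 : ℝ) * β + 1 - β - β * (i : ℝ) + (j : ℝ))
      = ∏ k ∈ range m, (a - N2 * β + k) := by
    refine prod_congr rfl fun k _ => ?_; rw [ha]; try ring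
  have eR2 : ∏ j ∈ range m, (x + 1 - β - β * (i : ℝ) + (j : ℝ))
      = ∏ k ∈ range m, (a + k) := by
    refine prod_congr rfl fun k _ => ?_; rw [ha]; try ring
  rw [e2, e3, eR1, eR2]
  have hprodne : ∏ k ∈ range m, (a + (k : ℝ)) ≠ 0 := prod_ne_zero_iff.mpr hden'
  field_simp
end
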